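/- Let ν > 1 and let Λ = {x_j} ⊆ ℝⁿ satisfy max(|x_i|,|x_j|) ≤ ν|x_i−x_j| for i ≠ j, and let F be the family of all cubes centered at points of Λ. Set Ω = Λ (closure). Then there exist 0 < r₁ < r₂ < ∞ (depending only on ν and n) such that the weighted Morrey norms satisfy ‖f‖_{M^p_{λ,F}(w)} ≍ ‖f‖_{M^p_{λ,W_{r₁,r₂}}(w)} for all f, where W_{r₁,r₂} = {cubes Q : r₁ diam Q ≤ dist(Q,Ω) ≤ r₂ diam Q}. -/

import Mathlib

open MeasureTheory ENNReal

noncomputable section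

/-- An axis-parallel cube in `ℝⁿ`, given by its center and (positive) side length. -/
structure Cube (n : ℕ) where
  center : EuclideanSpace ℝ (Fin n)
  side : ℝ
  side_pos : 0 < side

namespace Cube

variable {n : ℕ}

/-- The (closed) cube as a subset of `ℝⁿ`. -/
def toSet (Q : Cube n) : Set (EuclideanSpace ℝ (Fin n)) :=
  {x | ∀ i, |x i - Q.center i| ≤ Q.side / 2}

/-- The volume `|Q| = side^n` of a cube. -/
def vol (Q : Cube n) : ℝ := Q.side ^ n

/-- The Euclidean diameter `√n · side` of a cube. -/
def diam (Q : Cube n) : ℝ := Real.sqrt n * Q.side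

/-- The concentric dilation `tQ` of a cube. -/
def dilate (Q : Cube n) (t : ℝ) (ht : 0 < t) : Cube n :=
  ⟨Q.center, t * Q.side, mul_pos ht Q.side_pos⟩

/-- A dyadic child of a cube, indexed by a choice of sign in each coordinate. -/
def child (Q : Cube n) (s : Fin n → Bool) : Cube n :=
  ⟨WithLp.toLp 2 (fun i => Q.center i + (if s i then (1 : ℝ) else -1) * Q.side / 4), Q.side / 2, by
    have := Q.side_pos; linarith⟩

end Cube

/-- Distance between two sets in `ℝⁿ`: `inf {dist x y : x ∈ A, y ∈ B}`. -/
def setDist {n : ℕ} (A B : Set (EuclideanSpace ℝ (Fin n))) : ℝ :=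
  ⨅ (x : A) (y : B), dist (x : EuclideanSpace ℝ (Fin n)) (y : EuclideanSpace ℝ (Fin n))

/-- The average `⟨|f|⟩_Q = (1/|Q|) ∫_Q |f|` (as an extended nonnegative real). -/
def avg {n : ℕ} (Q : Cube n) (f : EuclideanSpace ℝ (Fin n) → ℝ) : ℝ≥0∞ :=
  (ENNReal.ofReal Q.vol)⁻¹ * ∫⁻ x in Q.toSet, ENNReal.ofReal |f x|

/-- The Hardy–Littlewood maximal operator over axis-parallel cubes. -/
def maximal {n : ℕ} (f : EuclideanSpace ℝ (Fin n) → ℝ)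
    (x : EuclideanSpace ℝ (Fin n)) : ℝ≥0∞ :=
  ⨆ (Q : Cube n) (_ : x ∈ Q.toSet), avg Q f

/-- Weighted Morrey norm adapted to a family `F` of cubes, for `ℝ≥0∞`-valued `f`:
`sup_{Q ∈ F} ((1/|Q|^λ) ∫_Q f^p w)^{1/p}`. -/
def morreyNormE {n : ℕ} (F : Set (Cube n)) (lam p : ℝ)
    (w : EuclideanSpace ℝ (Fin n) → ℝ) (f : EuclideanSpace ℝ (Fin n) → ℝ≥0∞) : ℝ≥0∞ :=
  ⨆ (Q : Cube n) (_ : Q ∈ F),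
    ((ENNReal.ofReal (Q.vol ^ lam))⁻¹ *
      ∫⁻ x in Q.toSet, (f x) ^ p * ENNReal.ofReal (w x)) ^ (1 / p)

/-- Weighted Morrey norm adapted to a family `F` of cubes, for real-valued `f`. -/
def morreyNorm {n : ℕ} (F : Set (Cube n)) (lam p : ℝ)
    (w f : EuclideanSpace ℝ (Fin n) → ℝ) : ℝ≥0∞ :=
  morreyNormE F lam p w (fun x => ENNReal.ofReal |f x|)

/-- The Whitney-type family `W_{r₁,r₂}` of cubes with
`r₁ diam Q ≤ dist(Q,Ω) ≤ r₂ diam Q`. -/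
def whitneyFamily {n : ℕ} (Ω : Set (EuclideanSpace ℝ (Fin n))) (r₁ r₂ : ℝ) :
    Set (Cube n) :=
  {Q | r₁ * Q.diam ≤ setDist Q.toSet Ω ∧ setDist Q.toSet Ω ≤ r₂ * Q.diam}

/-- The Muckenhoupt-type condition `A_X` for the weighted Morrey space attached to `F`:
`⟨|f|⟩_Q ‖χ_Q‖ ≤ C ‖f χ_Q‖` for all `f` and all cubes `Q`. -/
def morreyA {n : ℕ} (F : Set (Cube n)) (lam p : ℝ)
    (w : EuclideanSpace ℝ (Fin n) → ℝ) (C : ℝ) : Prop :=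
  ∀ (f : EuclideanSpace ℝ (Fin n) → ℝ) (Q : Cube n),
    avg Q f * morreyNorm F lam p w (Q.toSet.indicator fun _ => 1) ≤
      ENNReal.ofReal C * morreyNorm F lam p w (Q.toSet.indicator f)

/-- Boundedness of the Hardy–Littlewood maximal operator on the weighted Morrey
space attached to `F`, with constant `C`. -/
def maximalBoundedOnMorrey {n : ℕ} (F : Set (Cube n)) (lam p : ℝ)
    (w : EuclideanSpace ℝ (Fin n) → ℝ) (C : ℝ) : Prop :=
  ∀ f : EuclideanSpace ℝ (Fin n) → ℝ,
    morreyNormE F lam p w (maximal f) ≤ ENNReal.ofReal C * morreyNorm F lam p w f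


section Aux0
open Metric
variable {n : ℕ}
local notation "E" => EuclideanSpace ℝ (Fin n)
set_option maxHeartbeats 1000000

lemma coord_le_dist (x y : E) (i : Fin n) : |x i - y i| ≤ dist x y := by
  have h := EuclideanSpace.dist_eq x y
  rw [h]
  have h1 : |x i - y i| = Real.sqrt (dist (x i) (y i) ^ 2) := by
    rw [Real.sqrt_sq_eq_abs, Real.dist_eq, abs_abs]
  rw [h1]
  apply Real.sqrt_le_sqrt
  exact Finset.single_le_sum (f := fun j => dist (x j) (y j) ^ 2)
    (fun j _ => sq_nonneg _) (Finset.mem_univ i)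

lemma dist_le_of_coords {x y : E} {a : ℝ} (ha : 0 ≤ a)
    (h : ∀ i, |x i - y i| ≤ a) : dist x y ≤ Real.sqrt n * a := by
  rw [EuclideanSpace.dist_eq]
  have h2 : ∑ i : Fin n, dist (x i) (y i) ^ 2 ≤ (n : ℝ) * a ^ 2 := by
    calc ∑ i : Fin n, dist (x i) (y i) ^ 2 ≤ ∑ _i : Fin n, a ^ 2 := by
          apply Finset.sum_le_sum
          intro i _
          have := h i
          rw [Real.dist_eq]
          nlinarith [abs_nonneg (x i - y i)]
      _ = (n : ℝ) * a ^ 2 := by simp [Finset.sum_const]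
  calc Real.sqrt (∑ i : Fin n, dist (x i) (y i) ^ 2) ≤ Real.sqrt ((n : ℝ) * a ^ 2) :=
        Real.sqrt_le_sqrt h2
    _ = Real.sqrt n * a := by
        rw [Real.sqrt_mul (by positivity), Real.sqrt_sq ha]

end Aux0


section Aux
open Metric
variable {n : ℕ}
local notation "E" => EuclideanSpace ℝ (Fin n)
set_option maxHeartbeats 1000000

lemma inner_nonneg (A B : Set E) (x : A) : 0 ≤ ⨅ (y : B), dist (x:E) (y:E) := by
  rcases isEmpty_or_nonempty B with h | h
  · simp [iInf_of_empty, Real.sInf_empty]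
  · exact le_ciInf fun y => dist_nonneg

lemma setDist_le_dist {A B : Set E} {x y : E} (hx : x ∈ A) (hy : y ∈ B) :
    setDist A B ≤ dist x y := by
  unfold setDist
  have h1 : (⨅ (x : A) (y : B), dist (x:E) (y:E)) ≤ ⨅ (y : B), dist x (y:E) := by
    apply ciInf_le _ (⟨x, hx⟩ : A)
    refine ⟨0, ?_⟩
    rintro r ⟨a, rfl⟩
    exact inner_nonneg A B a
  refine h1.trans ?_
  apply ciInf_le _ (⟨y, hy⟩ : B)
  refine ⟨0, ?_⟩
  rintro r ⟨b, rfl⟩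
  exact dist_nonneg

lemma le_setDist {A B : Set E} {c : ℝ} (hA : A.Nonempty) (hB : B.Nonempty)
    (h : ∀ x ∈ A, ∀ y ∈ B, c ≤ dist x y) : c ≤ setDist A B := by
  haveI : Nonempty A := hA.to_subtype
  haveI : Nonempty B := hB.to_subtype
  unfold setDist
  exact le_ciInf fun x => le_ciInf fun y => h x x.2 y y.2

lemma setDist_le_infDist {A B : Set E} {y : E} (hy : y ∈ A) (hB : B.Nonempty) :
    setDist A B ≤ infDist y B := by
  refine le_of_forall_pos_le_add fun ε hε => ?_
  obtain ⟨p, hp, hd⟩ := (infDist_lt_iff hB).1 (by linarith : infDist y B < infDist y B + ε)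
  exact le_trans (setDist_le_dist hy hp) hd.le

lemma exists_close_of_setDist_lt {A B : Set E} {c : ℝ} (hA : A.Nonempty) (hB : B.Nonempty)
    (h : setDist A B < c) : ∃ x ∈ A, ∃ y ∈ B, dist x y < c := by
  haveI : Nonempty A := hA.to_subtype
  haveI : Nonempty B := hB.to_subtype
  unfold setDist at h
  obtain ⟨x, hx⟩ := exists_lt_of_ciInf_lt h
  obtain ⟨y, hy⟩ := exists_lt_of_ciInf_lt hx
  exact ⟨x, x.2, y, y.2, hy⟩

-- Packing lemma
lemma pack_finset (hn : 0 < n) (c : E) {R δ : ℝ} (hδ : 0 < δ) (hR : 0 ≤ R)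
    (F : Finset E) (hF : ∀ x ∈ F, x ∈ closedBall c R)
    (hsep : ∀ x ∈ F, ∀ y ∈ F, x ≠ y → δ ≤ dist x y) :
    (F.card : ℝ) ≤ ((2*R+δ)/δ)^n := by
  haveI : Nonempty (Fin n) := ⟨⟨0, hn⟩⟩
  haveI : Nontrivial E := inferInstance
  set μ : Measure E := volume
  have hB0 : 0 < μ (ball (0:E) 1) := measure_ball_pos μ 0 one_pos
  have hBt : μ (ball (0:E) 1) < ⊤ := measure_ball_lt_top
  have hdisj : (↑F : Set E).PairwiseDisjoint (fun x => ball x (δ/2)) := by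
    intro x hx y hy hxy
    exact ball_disjoint_ball (by have := hsep x hx y hy hxy; linarith)
  have hmeas : μ (⋃ x ∈ F, ball x (δ/2)) = ∑ x ∈ F, μ (ball x (δ/2)) :=
    measure_biUnion_finset hdisj (fun x _ => measurableSet_ball)
  have hsub : (⋃ x ∈ F, ball x (δ/2)) ⊆ closedBall c (R + δ/2) := by
    intro y hy
    simp only [Set.mem_iUnion] at hy
    obtain ⟨x, hx, hyx⟩ := hy
    have h1 : dist y x < δ/2 := mem_ball.1 hyx
    have h2 : dist x c ≤ R := mem_closedBall.1 (hF x hx)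
    exact mem_closedBall.2 (le_trans (dist_triangle y x c) (by linarith))
  have hvol : ∀ x : E, μ (ball x (δ/2)) = ENNReal.ofReal ((δ/2)^n) * μ (ball 0 1) := by
    intro x
    rw [Measure.addHaar_ball μ x (by positivity)]
    congr 1
    rw [finrank_euclideanSpace_fin]
  have key : (F.card : ℝ≥0∞) * (ENNReal.ofReal ((δ/2)^n) * μ (ball 0 1)) ≤
      ENNReal.ofReal ((R+δ/2)^n) * μ (ball 0 1) := by
    calc (F.card : ℝ≥0∞) * (ENNReal.ofReal ((δ/2)^n) * μ (ball 0 1))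
        = ∑ x ∈ F, μ (ball x (δ/2)) := by
          rw [Finset.sum_congr rfl (fun x _ => hvol x), Finset.sum_const, nsmul_eq_mul]
      _ = μ (⋃ x ∈ F, ball x (δ/2)) := hmeas.symm
      _ ≤ μ (closedBall c (R + δ/2)) := measure_mono hsub
      _ = ENNReal.ofReal ((R+δ/2)^n) * μ (ball 0 1) := by
          rw [Measure.addHaar_closedBall μ c (by positivity)]
          congr 1
          rw [finrank_euclideanSpace_fin]
  have key2 : (F.card : ℝ≥0∞) * ENNReal.ofReal ((δ/2)^n) ≤ ENNReal.ofReal ((R+δ/2)^n) := by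
    rw [← mul_assoc] at key
    exact (ENNReal.mul_le_mul_iff_left hB0.ne' hBt.ne).1 key
  have key3 : (F.card : ℝ) * ((δ/2)^n) ≤ (R+δ/2)^n := by
    have := key2
    rw [← ENNReal.ofReal_natCast, ← ENNReal.ofReal_mul (by positivity)] at this
    exact (ENNReal.ofReal_le_ofReal_iff (by positivity)).1 this
  have hpos : (0:ℝ) < (δ/2)^n := by positivity
  have heq : (R+δ/2)/(δ/2) = (2*R+δ)/δ := by
    field_simp
  rw [← heq, div_pow, le_div_iff₀ hpos]
  exact key3

lemma pack_set (hn : 0 < n) (c : E) {R δ : ℝ} (hδ : 0 < δ) (hR : 0 ≤ R)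
    {S : Set E} (hS : ∀ x ∈ S, x ∈ closedBall c R)
    (hsep : ∀ x ∈ S, ∀ y ∈ S, x ≠ y → δ ≤ dist x y) :
    S.Finite ∧ (S.ncard : ℝ) ≤ ((2*R+δ)/δ)^n := by
  have hfin : S.Finite := by
    by_contra hinf
    have hinf' : S.Infinite := hinf
    obtain ⟨F, hFS, hcard⟩ := hinf'.exists_subset_card_eq (⌈((2*R+δ)/δ)^n⌉₊ + 1)
    have h1 := pack_finset hn c hδ hR F (fun x hx => hS x (hFS hx))
      (fun x hx y hy hxy => hsep x (hFS hx) y (hFS hy) hxy)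
    rw [hcard] at h1
    push_cast at h1
    have := Nat.le_ceil (((2*R+δ)/δ)^n)
    linarith
  refine ⟨hfin, ?_⟩
  have h1 := pack_finset hn c hδ hR hfin.toFinset
    (fun x hx => hS x (hfin.mem_toFinset.1 hx))
    (fun x hx y hy hxy => hsep x (hfin.mem_toFinset.1 hx) y (hfin.mem_toFinset.1 hy) hxy)
  rwa [Set.ncard_eq_toFinset_card S hfin]

def Lac (ν : ℝ) (Λ : Set (EuclideanSpace ℝ (Fin n))) : Prop :=
  ∀ x ∈ Λ, ∀ y ∈ Λ, x ≠ y → max ‖x‖ ‖y‖ ≤ ν * dist x y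

lemma lac_norm_le {ν : ℝ} {Λ : Set E} (hΛ : Lac ν Λ) {x y : E} (hx : x ∈ Λ)
    (hy : y ∈ Λ) (hxy : x ≠ y) : ‖x‖ ≤ ν * dist x y :=
  le_trans (le_max_left _ _) (hΛ x hx y hy hxy)

lemma lac_closure {ν : ℝ} (hν : 1 < ν) {Λ : Set E} (hΛ : Lac ν Λ) :
    Lac ν (closure Λ) := by
  have hν0 : (0:ℝ) < ν := by linarith
  -- suffices to bound each norm
  intro p hp q hq hpq
  have key : ∀ p' q' : E, p' ∈ closure Λ → q' ∈ closure Λ → p' ≠ q' → ‖p'‖ ≤ ν * dist p' q' := by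
    intro p' q' hp' hq' hne
    refine le_of_forall_pos_le_add fun ε hε => ?_
    have hd : 0 < dist p' q' := dist_pos.2 hne
    set δ := min (ε / (3*ν+3)) (dist p' q' / 3) with hδdef
    have hδ0 : 0 < δ := by
      apply lt_min
      · positivity
      · positivity
    obtain ⟨a, ha, hap⟩ := Metric.mem_closure_iff.1 hp' δ hδ0
    obtain ⟨b, hb, hbq⟩ := Metric.mem_closure_iff.1 hq' δ hδ0
    have hab : a ≠ b := by
      intro h
      subst h
      have : dist p' q' ≤ dist p' a + dist a q' := dist_triangle _ _ _
      rw [dist_comm a q'] at this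
      have hδ3 : δ ≤ dist p' q' / 3 := min_le_right _ _
      linarith
    have h1 : ‖a‖ ≤ ν * dist a b := lac_norm_le hΛ ha hb hab
    have h2 : dist a b ≤ dist p' q' + 2 * δ := by
      have t1 : dist a b ≤ dist a p' + dist p' b := dist_triangle _ _ _
      have t2 : dist p' b ≤ dist p' q' + dist q' b := dist_triangle _ _ _
      have e1 : dist a p' = dist p' a := dist_comm a p'
      linarith
    have h3 : ‖p'‖ ≤ ‖a‖ + δ := by
      have := norm_sub_norm_le p' a
      have h4 : ‖p' - a‖ ≤ δ := by
        rw [← dist_eq_norm]; linarith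
      linarith [abs_le.1 (abs_norm_sub_norm_le p' a)]
    have hδε : δ ≤ ε / (3*ν+3) := min_le_left _ _
    have : ‖p'‖ ≤ ν * dist p' q' + (2*ν+1) * δ := by nlinarith
    have h5 : (2*ν+1) * δ ≤ ε := by
      have : (2*ν+1) * δ ≤ (2*ν+1) * (ε / (3*ν+3)) := by nlinarith
      have h6 : (2*ν+1) * (ε / (3*ν+3)) ≤ ε := by
        rw [mul_div_assoc']
        rw [div_le_iff₀ (by linarith : (0:ℝ) < 3*ν+3)]
        nlinarith
      linarith
    linarith
  apply max_le
  · exact key p q hp hq hpq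
  · rw [dist_comm]
    exact key q p hq hp (Ne.symm hpq)

lemma lac_shell_finite {ν : ℝ} (hν : 1 < ν) (hn : 0 < n) {Λ : Set E} (hΛ : Lac ν Λ)
    {a : ℝ} (ha : 0 < a) :
    {x ∈ Λ | a ≤ ‖x‖ ∧ ‖x‖ ≤ 2*a}.Finite := by
  have hν0 : (0:ℝ) < ν := by linarith
  refine (pack_set hn (0:E) (δ := a/ν) (by positivity) (by positivity : (0:ℝ) ≤ 2*a)
    (S := {x ∈ Λ | a ≤ ‖x‖ ∧ ‖x‖ ≤ 2*a}) ?_ ?_).1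
  · rintro x ⟨_, _, h2⟩
    simpa [mem_closedBall, dist_eq_norm] using h2
  · rintro x ⟨hxΛ, hx1, _⟩ y ⟨hyΛ, _, _⟩ hxy
    have := lac_norm_le hΛ hxΛ hyΛ hxy
    rw [div_le_iff₀ hν0, mul_comm]
    calc a ≤ ‖x‖ := hx1
      _ ≤ ν * dist x y := this

lemma lac_countable {ν : ℝ} (hν : 1 < ν) (hn : 0 < n) {Λ : Set E} (hΛ : Lac ν Λ) :
    Λ.Countable := by
  have hsub : Λ ⊆ {0} ∪ ⋃ (k : ℤ), {x ∈ Λ | (2:ℝ)^k ≤ ‖x‖ ∧ ‖x‖ ≤ 2*(2:ℝ)^k} := by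
    intro x hx
    rcases eq_or_ne x 0 with h | h
    · exact Or.inl h
    · right
      have hx0 : 0 < ‖x‖ := norm_pos_iff.2 h
      obtain ⟨k, hk1, hk2⟩ := exists_mem_Ico_zpow hx0 (by norm_num : (1:ℝ) < 2)
      refine Set.mem_iUnion.2 ⟨k, hx, hk1, ?_⟩
      have : (2:ℝ)^(k+1) = 2 * 2^k := by
        rw [zpow_add_one₀ (by norm_num : (2:ℝ) ≠ 0)]; ring
      linarith [hk2.le, this]
  refine Set.Countable.mono hsub ?_
  refine Set.Countable.union (Set.countable_singleton 0) ?_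
  refine Set.countable_iUnion fun k => ?_
  exact (lac_shell_finite hν hn hΛ (zpow_pos (by norm_num : (0:ℝ) < 2) k)).countable

lemma lac_closure_subset {ν : ℝ} (hν : 1 < ν) {Λ : Set E} (hΛ : Lac ν Λ) :
    closure Λ ⊆ Λ ∪ {0} := by
  have hν0 : (0:ℝ) < ν := by linarith
  intro p hp
  by_contra hcon
  rw [Set.mem_union] at hcon
  push_neg at hcon
  obtain ⟨hpΛ, hp0⟩ := hcon
  have hp0' : p ≠ 0 := by simpa using hp0
  have hnp : 0 < ‖p‖ := norm_pos_iff.2 hp0'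
  set r := ‖p‖ / (8*ν) with hr
  have hr0 : 0 < r := by positivity
  obtain ⟨q1, hq1, hq1d⟩ := Metric.mem_closure_iff.1 hp r hr0
  have hq1p : q1 ≠ p := fun h => hpΛ (h ▸ hq1)
  have hd1 : 0 < dist p q1 := by rw [dist_pos]; exact fun h => hq1p h.symm
  obtain ⟨q2, hq2, hq2d⟩ := Metric.mem_closure_iff.1 hp (min r (dist p q1)) (lt_min hr0 hd1)
  have hq21 : q2 ≠ q1 := by
    intro h
    rw [h] at hq2d
    exact absurd (hq2d.trans_le (min_le_right _ _)) (lt_irrefl _)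
  have hq2r : dist p q2 < r := lt_of_lt_of_le hq2d (min_le_left _ _)
  have h1 : ‖q1‖ ≤ ν * dist q1 q2 := lac_norm_le hΛ hq1 hq2 (Ne.symm hq21)
  have h2 : dist q1 q2 ≤ 2 * r := by
    have := dist_triangle q1 p q2
    rw [dist_comm q1 p] at this
    linarith
  have h3 : ‖p‖ - r ≤ ‖q1‖ := by
    have h4 : ‖p - q1‖ ≤ r := by rw [← dist_eq_norm]; linarith
    linarith [abs_le.1 (abs_norm_sub_norm_le p q1)]
  have h5 : ν * (2*r) = ‖p‖/4 := by
    rw [hr]; field_simp; ring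
  have h6 : r ≤ ‖p‖ / 8 := by
    rw [hr]
    apply div_le_div_of_nonneg_left hnp.le (by norm_num)
    nlinarith
  nlinarith

lemma lac_closure_null {ν : ℝ} (hν : 1 < ν) (hn : 0 < n) {Λ : Set E} (hΛ : Lac ν Λ) :
    volume (closure Λ) = 0 := by
  haveI : Nonempty (Fin n) := ⟨⟨0, hn⟩⟩
  haveI : NullSingletonClass (volume : Measure E) := inferInstance
  have h1 : (closure Λ).Countable :=
    Set.Countable.mono (lac_closure_subset hν hΛ)
      ((lac_countable hν hn hΛ).union (Set.countable_singleton 0))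
  exact h1.measure_zero _

end Aux


section Aux2
open Metric
variable {n : ℕ}
local notation "E" => EuclideanSpace ℝ (Fin n)
set_option maxHeartbeats 1000000

namespace Cube

lemma mem_toSet {Q : Cube n} {x : E} : x ∈ Q.toSet ↔ ∀ i, |x i - Q.center i| ≤ Q.side / 2 :=
  Iff.rfl

lemma center_mem (Q : Cube n) : Q.center ∈ Q.toSet := by
  intro i
  simp only [sub_self, abs_zero]
  linarith [Q.side_pos]

lemma toSet_nonempty (Q : Cube n) : Q.toSet.Nonempty := ⟨Q.center, Q.center_mem⟩

lemma dist_center_le {Q : Cube n} {x : E} (hx : x ∈ Q.toSet) :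
    dist x Q.center ≤ Real.sqrt n * (Q.side / 2) :=
  dist_le_of_coords (by linarith [Q.side_pos]) hx

lemma dist_le_of_mem {Q : Cube n} {x y : E} (hx : x ∈ Q.toSet) (hy : y ∈ Q.toSet) :
    dist x y ≤ Real.sqrt n * Q.side := by
  apply dist_le_of_coords Q.side_pos.le
  intro i
  have h1 := hx i
  have h2 := hy i
  calc |x i - y i| = |(x i - Q.center i) + (Q.center i - y i)| := by ring_nf
    _ ≤ |x i - Q.center i| + |Q.center i - y i| := abs_add_le _ _
    _ ≤ Q.side / 2 + Q.side / 2 := by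
        rw [abs_sub_comm (Q.center i)]
        exact add_le_add h1 h2
    _ = Q.side := by ring

lemma subset_of_dist {W Q' : Cube n} (h : W.side / 2 + dist W.center Q'.center ≤ Q'.side / 2) :
    W.toSet ⊆ Q'.toSet := by
  intro y hy i
  calc |y i - Q'.center i| = |(y i - W.center i) + (W.center i - Q'.center i)| := by ring_nf
    _ ≤ |y i - W.center i| + |W.center i - Q'.center i| := abs_add_le _ _
    _ ≤ W.side / 2 + dist W.center Q'.center := by
        refine add_le_add (hy i) ?_
        exact coord_le_dist W.center Q'.center i
    _ ≤ Q'.side / 2 := h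

lemma diam_pos (hn : 0 < n) (Q : Cube n) : 0 < Q.diam := by
  have h1 : (0:ℝ) < Real.sqrt n := Real.sqrt_pos.2 (by exact_mod_cast hn)
  exact mul_pos h1 Q.side_pos

end Cube

end Aux2


section Dir1
open Metric
variable {n : ℕ}
local notation "E" => EuclideanSpace ℝ (Fin n)
set_option maxHeartbeats 1000000

/-- The basic Morrey quantity attached to a cube. -/
def TT {n : ℕ} (lam p : ℝ) (w : EuclideanSpace ℝ (Fin n) → ℝ)
    (g : EuclideanSpace ℝ (Fin n) → ℝ≥0∞) (Q : Cube n) : ℝ≥0∞ :=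
  (ENNReal.ofReal (Q.vol ^ lam))⁻¹ * ∫⁻ x in Q.toSet, (g x) ^ p * ENNReal.ofReal (w x)

lemma morreyNormE_eq (F : Set (Cube n)) (lam p : ℝ) (w : E → ℝ) (g : E → ℝ≥0∞) :
    morreyNormE F lam p w g = ⨆ (Q : Cube n) (_ : Q ∈ F), (TT lam p w g Q) ^ (1/p) := rfl

lemma Cube.vol_pos (Q : Cube n) : 0 < Q.vol := pow_pos Q.side_pos n

lemma TT_le_of_subset (hn : 0 < n) {lam : ℝ} (hlam : 0 ≤ lam) (p : ℝ) (w : E → ℝ)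
    (g : E → ℝ≥0∞) {W Q' : Cube n} {K : ℝ} (hK : 1 ≤ K) (hside : Q'.side = K * W.side)
    (hsub : W.toSet ⊆ Q'.toSet) :
    TT lam p w g W ≤ ENNReal.ofReal (K ^ ((n:ℝ)*lam)) * TT lam p w g Q' := by
  have hK0 : (0:ℝ) < K := lt_of_lt_of_le one_pos hK
  have hW : 0 < W.vol := W.vol_pos
  have hQ : Q'.vol = K^n * W.vol := by
    rw [Cube.vol, Cube.vol, hside, mul_pow]
  have hr : Q'.vol ^ lam = K^((n:ℝ)*lam) * W.vol ^ lam := by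
    rw [hQ, Real.mul_rpow (by positivity) hW.le]
    congr 1
    rw [← Real.rpow_natCast K n, ← Real.rpow_mul hK0.le]
  set D := ENNReal.ofReal (K ^ ((n:ℝ)*lam)) with hD
  have hD0 : D ≠ 0 := by
    rw [hD, Ne, ENNReal.ofReal_eq_zero, not_le]
    positivity
  have hDt : D ≠ ⊤ := ENNReal.ofReal_ne_top
  have ha : ENNReal.ofReal (Q'.vol ^ lam) = D * ENNReal.ofReal (W.vol ^ lam) := by
    rw [hr, ENNReal.ofReal_mul (by positivity)]
  unfold TT
  rw [ha]
  have hrhs : D * ((D * ENNReal.ofReal (W.vol ^ lam))⁻¹ *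
      ∫⁻ x in Q'.toSet, (g x) ^ p * ENNReal.ofReal (w x)) =
      (ENNReal.ofReal (W.vol ^ lam))⁻¹ *
      ∫⁻ x in Q'.toSet, (g x) ^ p * ENNReal.ofReal (w x) := by
    rw [ENNReal.mul_inv (Or.inl hD0) (Or.inl hDt), ← mul_assoc, ← mul_assoc,
      ENNReal.mul_inv_cancel hD0 hDt, one_mul]
  rw [hrhs]
  exact mul_le_mul_right (lintegral_mono_set hsub) _

lemma dir1E (hn : 0 < n) {ν lam p : ℝ} (hν : 1 < ν) (hlam0 : 0 < lam) (hp : 1 ≤ p)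
    {Λ : Set E} (hΛ : Lac ν Λ) (hne : Λ.Nonempty) (w : E → ℝ) (g : E → ℝ≥0∞) :
    morreyNormE (whitneyFamily (closure Λ) 3 8) lam p w g ≤
      ENNReal.ofReal ((22*Real.sqrt n+1) ^ ((n:ℝ)*lam)) *
        morreyNormE {Q : Cube n | Q.center ∈ Λ} lam p w g := by
  have hp0 : (0:ℝ) < p := lt_of_lt_of_le one_pos hp
  have h1p : 1/p ≤ 1 := (div_le_one hp0).2 hp
  have h1p0 : (0:ℝ) ≤ 1/p := by positivity
  set sq := Real.sqrt n with hsqdef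
  have hsq : 1 ≤ sq := Real.one_le_sqrt.2 (by exact_mod_cast hn)
  set K := 22*sq+1 with hKdef
  have hK1 : 1 ≤ K := by linarith
  set D := ENNReal.ofReal (K ^ ((n:ℝ)*lam)) with hD
  have hD1 : 1 ≤ D := ENNReal.one_le_ofReal.2 (Real.one_le_rpow hK1 (by positivity))
  rw [morreyNormE_eq, morreyNormE_eq]
  apply iSup₂_le
  intro W hW
  obtain ⟨hW1, hW2⟩ := hW
  have ht := W.side_pos
  have hΩne : (closure Λ).Nonempty := hne.closure
  have h9 : setDist W.toSet (closure Λ) < 9 * (sq * W.side) := by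
    refine lt_of_le_of_lt hW2 ?_
    have : W.diam = sq * W.side := rfl
    rw [this]
    have hd : 0 < sq * W.side := by positivity
    linarith
  obtain ⟨x, hx, pp, hpp, hxpp⟩ :=
    exists_close_of_setDist_lt W.toSet_nonempty hΩne h9
  obtain ⟨q, hq, hpq⟩ := Metric.mem_closure_iff.1 hpp (sq*W.side) (by positivity)
  have hdcq : dist W.center q ≤ (10.5*sq) * W.side := by
    have t1 : dist W.center q ≤ dist W.center x + dist x pp + dist pp q :=
      dist_triangle4 _ _ _ _
    have t2 : dist W.center x ≤ sq * (W.side/2) := by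
      rw [dist_comm]; exact Cube.dist_center_le hx
    linarith
  have hQside : (0:ℝ) < K * W.side := by positivity
  set Q' : Cube n := ⟨q, K * W.side, hQside⟩ with hQ'
  have hsub : W.toSet ⊆ Q'.toSet := by
    apply Cube.subset_of_dist
    show W.side/2 + dist W.center q ≤ (K * W.side)/2
    rw [hKdef]
    nlinarith
  have hT := TT_le_of_subset hn hlam0.le p w g hK1 (rfl : Q'.side = K * W.side) hsub
  calc (TT lam p w g W)^(1/p)
      ≤ (D * TT lam p w g Q')^(1/p) := ENNReal.rpow_le_rpow hT h1p0
    _ = D^(1/p) * (TT lam p w g Q')^(1/p) := ENNReal.mul_rpow_of_nonneg _ _ h1p0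
    _ ≤ D^(1:ℝ) * (TT lam p w g Q')^(1/p) :=
        mul_le_mul_left (ENNReal.rpow_le_rpow_of_exponent_le hD1 h1p) _
    _ = D * (TT lam p w g Q')^(1/p) := by rw [ENNReal.rpow_one]
    _ ≤ D * ⨆ (Q : Cube n) (_ : Q ∈ {Q : Cube n | Q.center ∈ Λ}), (TT lam p w g Q) ^ (1/p) :=
        mul_le_mul_right
          (le_iSup₂ (f := fun (Q : Cube n) (_ : Q ∈ {Q : Cube n | Q.center ∈ Λ}) =>
            (TT lam p w g Q) ^ (1/p)) Q' hq) _

end Dir1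


section Cover
open Metric
variable {n : ℕ}
local notation "E" => EuclideanSpace ℝ (Fin n)
set_option maxHeartbeats 1000000

/-- side length of covering cubes at scale `k`. -/
def uu (s : ℝ) (k : ℕ) : ℝ := s / (8 * 2^k)

/-- centers of covering cubes. -/
def Wcc {n : ℕ} (x₀ : EuclideanSpace ℝ (Fin n)) (s : ℝ) (k : ℕ) (z : Fin n → ℤ) :
    EuclideanSpace ℝ (Fin n) := WithLp.toLp 2 (fun i => x₀ i + uu s k * z i)

lemma uu_pos {s : ℝ} (hs : 0 < s) (k : ℕ) : 0 < uu s k := by unfold uu; positivity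

/-- covering cubes at scale `k`. -/
def Wq {n : ℕ} (x₀ : EuclideanSpace ℝ (Fin n)) {s : ℝ} (hs : 0 < s) (k : ℕ)
    (z : Fin n → ℤ) : Cube n := ⟨Wcc x₀ s k z, uu s k, uu_pos hs k⟩

/-- the shell at scale `k` inside `Q₀`. -/
def RRset {n : ℕ} (Ω : Set (EuclideanSpace ℝ (Fin n))) (Q₀ : Cube n) (k : ℕ) :
    Set (EuclideanSpace ℝ (Fin n)) :=
  {x | x ∈ Q₀.toSet ∧ Q₀.diam / 2^k / 2 < Metric.infDist x Ω ∧
    Metric.infDist x Ω ≤ Q₀.diam / 2^k}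

/-- the index set of the selected covering cubes. -/
def Scov {n : ℕ} (Ω : Set (EuclideanSpace ℝ (Fin n))) (Q₀ : Cube n) :
    Set (ℕ × (Fin n → ℤ)) :=
  {kz | ((Wq Q₀.center Q₀.side_pos kz.1 kz.2).toSet ∩ RRset Ω Q₀ kz.1).Nonempty}

lemma Wcc_apply (x₀ : E) (s : ℝ) (k : ℕ) (z : Fin n → ℤ) (i : Fin n) :
    Wcc x₀ s k z i = x₀ i + uu s k * z i := rfl

lemma Wq_center (x₀ : E) {s : ℝ} (hs : 0 < s) (k : ℕ) (z : Fin n → ℤ) :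
    (Wq x₀ hs k z).center = Wcc x₀ s k z := rfl

lemma Wq_side (x₀ : E) {s : ℝ} (hs : 0 < s) (k : ℕ) (z : Fin n → ℤ) :
    (Wq x₀ hs k z).side = uu s k := rfl

lemma tau_eq {Q₀ : Cube n} (k : ℕ) :
    Q₀.diam / 2^k = 8 * Real.sqrt n * uu Q₀.side k := by
  unfold Cube.diam uu
  field_simp

lemma Wsep {s : ℝ} (hs : 0 < s) (x₀ : E) (k : ℕ) {z z' : Fin n → ℤ} (hne : z ≠ z') :
    uu s k ≤ dist (Wcc x₀ s k z) (Wcc x₀ s k z') := by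
  have hu := uu_pos hs k
  obtain ⟨i, hi⟩ : ∃ i, z i ≠ z' i := by
    by_contra h
    push_neg at h
    exact hne (funext h)
  have h1 : |Wcc x₀ s k z i - Wcc x₀ s k z' i| = uu s k * |(z i : ℝ) - (z' i : ℝ)| := by
    rw [Wcc_apply, Wcc_apply]
    rw [show x₀ i + uu s k * z i - (x₀ i + uu s k * z' i) = uu s k * ((z i : ℝ) - z' i) by ring]
    rw [abs_mul, abs_of_pos hu]
  have h2 : (1:ℝ) ≤ |(z i : ℝ) - (z' i : ℝ)| := by
    have : ((z i - z' i : ℤ) : ℝ) = (z i : ℝ) - z' i := by push_cast; ring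
    rw [← this, ← Int.cast_abs]
    exact_mod_cast Int.one_le_abs (sub_ne_zero.2 hi)
  calc uu s k = uu s k * 1 := (mul_one _).symm
    _ ≤ uu s k * |(z i : ℝ) - (z' i : ℝ)| := by nlinarith
    _ = |Wcc x₀ s k z i - Wcc x₀ s k z' i| := h1.symm
    _ ≤ dist (Wcc x₀ s k z) (Wcc x₀ s k z') := coord_le_dist _ _ i

lemma Wq_whitney (hn : 0 < n) {Ω : Set E} (hΩne : Ω.Nonempty) {Q₀ : Cube n}
    (k : ℕ) (z : Fin n → ℤ) (y : E)
    (hy1 : y ∈ (Wq Q₀.center Q₀.side_pos k z).toSet) (hy2 : y ∈ RRset Ω Q₀ k) :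
    Wq Q₀.center Q₀.side_pos k z ∈ whitneyFamily Ω 3 8 := by
  set W := Wq Q₀.center Q₀.side_pos k z with hW
  have hu : 0 < uu Q₀.side k := uu_pos Q₀.side_pos k
  have hsq : 1 ≤ Real.sqrt n := Real.one_le_sqrt.2 (by exact_mod_cast hn)
  obtain ⟨-, hd1, hd2⟩ := hy2
  rw [tau_eq k] at hd1 hd2
  have hdiam : W.diam = Real.sqrt n * uu Q₀.side k := rfl
  constructor
  · -- lower bound
    apply le_setDist W.toSet_nonempty hΩne
    intro x hx p hp
    have h1 : dist x y ≤ Real.sqrt n * uu Q₀.side k := by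
      have := Cube.dist_le_of_mem hx hy1
      rwa [Wq_side] at this
    have h2 : infDist y Ω ≤ dist y p := infDist_le_dist_of_mem hp
    have h3 : dist y p ≤ dist y x + dist x p := dist_triangle _ _ _
    rw [dist_comm y x] at h3
    rw [hdiam]
    nlinarith
  · -- upper bound
    have h1 : setDist W.toSet Ω ≤ infDist y Ω := setDist_le_infDist hy1 hΩne
    rw [hdiam]
    nlinarith

lemma cover_subset (hn : 0 < n) {Ω : Set E} (hΩc : IsClosed Ω) (hΩne : Ω.Nonempty)
    {Q₀ : Cube n} (hx₀ : Q₀.center ∈ Ω) :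
    Q₀.toSet \ Ω ⊆
      ⋃ (i : Scov Ω Q₀), (Wq Q₀.center Q₀.side_pos (i:ℕ × (Fin n → ℤ)).1 (i:ℕ × (Fin n → ℤ)).2).toSet := by
  intro x hx
  obtain ⟨hxQ, hxΩ⟩ := hx
  have hsq : 1 ≤ Real.sqrt n := Real.one_le_sqrt.2 (by exact_mod_cast hn)
  have hs := Q₀.side_pos
  have hdiam : 0 < Q₀.diam := Cube.diam_pos hn Q₀
  set d := infDist x Ω with hd
  have hd0 : 0 < d := (hΩc.notMem_iff_infDist_pos hΩne).1 hxΩ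
  have hdle : d ≤ Q₀.diam / 2 := by
    have h1 : d ≤ dist x Q₀.center := infDist_le_dist_of_mem hx₀
    have h2 := Cube.dist_center_le hxQ
    have : Real.sqrt n * (Q₀.side / 2) = Q₀.diam / 2 := by
      unfold Cube.diam; ring
    linarith [this ▸ h2]
  -- find the right scale
  have hPex : ∃ m : ℕ, Q₀.diam / 2^m < d := by
    obtain ⟨m, hm⟩ := exists_pow_lt_of_lt_one (div_pos hd0 hdiam) (by norm_num : (1:ℝ)/2 < 1)
    refine ⟨m, ?_⟩
    have h2 : ((1:ℝ)/2)^m = 1/2^m := by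
      rw [div_pow, one_pow]
    rw [h2] at hm
    have h3 := (div_lt_div_iff₀ (by positivity : (0:ℝ) < 2^m) hdiam).1 hm
    rw [div_lt_iff₀ (by positivity : (0:ℝ) < 2^m)]
    linarith
  haveI : DecidablePred fun m : ℕ => Q₀.diam / 2^m < d := fun _ => Classical.dec _
  set k₁ := Nat.find hPex with hk₁
  have hk₁spec : Q₀.diam / 2^k₁ < d := Nat.find_spec hPex
  have hk₁0 : k₁ ≠ 0 := by
    intro h
    rw [h] at hk₁spec
    simp at hk₁spec
    linarith
  set k := k₁ - 1 with hk
  have hkk : k₁ = k + 1 := (Nat.succ_pred_eq_of_pos (Nat.pos_of_ne_zero hk₁0)).symm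
  have hupper : d ≤ Q₀.diam / 2^k := by
    have := Nat.find_min hPex (m := k) (by omega)
    linarith [not_lt.1 this]
  have hlower : Q₀.diam / 2^k / 2 < d := by
    have : Q₀.diam / 2^(k+1) = Q₀.diam / 2^k / 2 := by
      rw [pow_succ]; ring
    rw [hkk] at hk₁spec
    linarith [this ▸ hk₁spec]
  have hxRR : x ∈ RRset Ω Q₀ k := ⟨hxQ, hlower, hupper⟩
  -- find the grid cube containing x
  set u := uu Q₀.side k with hu
  have hu0 : 0 < u := uu_pos Q₀.side_pos k
  set z : Fin n → ℤ := fun i => round ((x i - Q₀.center i) / u) with hz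
  have hxW : x ∈ (Wq Q₀.center Q₀.side_pos k z).toSet := by
    intro i
    rw [Wq_center, Wq_side, Wcc_apply]
    have h1 : x i - (Q₀.center i + u * z i) = u * ((x i - Q₀.center i)/u - z i) := by
      field_simp
      ring
    rw [← hu, h1, abs_mul, abs_of_pos hu0]
    have h2 := abs_sub_round ((x i - Q₀.center i) / u)
    calc u * |(x i - Q₀.center i)/u - (z i : ℝ)| ≤ u * (1/2) := by
          rw [hz]
          nlinarith
      _ = u / 2 := by ring
  refine Set.mem_iUnion.2 ⟨⟨(k, z), ⟨x, hxW, hxRR⟩⟩, hxW⟩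

end Cover


section Count
open Metric
variable {n : ℕ}
local notation "E" => EuclideanSpace ℝ (Fin n)
set_option maxHeartbeats 2000000

lemma zpack (hn : 0 < n) {u : ℝ} (hu : 0 < u) (Wcf : (Fin n → ℤ) → E)
    (hsep : ∀ z z', z ≠ z' → u ≤ dist (Wcf z) (Wcf z'))
    {c : E} {R : ℝ} (hR : 0 ≤ R) (T : Set (Fin n → ℤ)) (hT : ∀ z ∈ T, dist (Wcf z) c ≤ R) :
    T.Finite ∧ (T.ncard : ℝ) ≤ ((2*R+u)/u)^n := by
  have hinj : Function.Injective Wcf := by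
    intro z z' h
    by_contra hne
    have h1 := hsep z z' hne
    rw [h, dist_self] at h1
    linarith
  have himg := pack_set hn c hu hR (S := Wcf '' T)
    (by rintro _ ⟨z, hz, rfl⟩; exact mem_closedBall.2 (hT z hz))
    (by
      rintro _ ⟨z, hz, rfl⟩ _ ⟨z', hz', rfl⟩ hne
      exact hsep z z' (fun h => hne (by rw [h])))
  refine ⟨Set.Finite.of_finite_image himg.1 hinj.injOn, ?_⟩
  rw [← Set.ncard_image_of_injective T hinj]
  exact himg.2

lemma ncard_biUnion_le_real {α ι : Type*} (t : Finset ι) {f : ι → Set α}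
    (hf : ∀ i, (f i).Finite) {B : ℝ} (hB : ∀ i ∈ t, ((f i).ncard : ℝ) ≤ B) :
    (⋃ i ∈ t, f i).Finite ∧ ((⋃ i ∈ t, f i).ncard : ℝ) ≤ t.card * B := by
  classical
  set F := t.biUnion fun i => (hf i).toFinset with hF
  have hsub : (⋃ i ∈ t, f i) ⊆ ↑F := by
    intro x hx
    simp only [Set.mem_iUnion] at hx
    obtain ⟨i, hi, hxi⟩ := hx
    simp only [hF, Finset.coe_biUnion, Set.mem_iUnion]
    exact ⟨i, hi, (hf i).mem_toFinset.2 hxi⟩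
  have hfin : (⋃ i ∈ t, f i).Finite := Set.Finite.subset F.finite_toSet hsub
  refine ⟨hfin, ?_⟩
  have h1 : (⋃ i ∈ t, f i).ncard ≤ F.card := by
    have := Set.ncard_le_ncard hsub F.finite_toSet
    rwa [Set.ncard_coe_finset] at this
  have h2 : (F.card : ℝ) ≤ ∑ i ∈ t, (((hf i).toFinset.card : ℝ)) := by
    have := Finset.card_biUnion_le (s := t) (t := fun i => (hf i).toFinset)
    calc (F.card : ℝ) ≤ ((∑ i ∈ t, (hf i).toFinset.card : ℕ) : ℝ) := by exact_mod_cast this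
      _ = ∑ i ∈ t, (((hf i).toFinset.card : ℝ)) := by push_cast; rfl
  have h3 : ∑ i ∈ t, (((hf i).toFinset.card : ℝ)) ≤ t.card * B := by
    have h4 : ∀ i ∈ t, (((hf i).toFinset.card : ℝ)) ≤ B := by
      intro i hi
      have := hB i hi
      rwa [Set.ncard_eq_toFinset_card _ (hf i)] at this
    calc ∑ i ∈ t, (((hf i).toFinset.card : ℝ)) ≤ t.card • B := Finset.sum_le_card_nsmul _ _ _ h4
      _ = t.card * B := nsmul_eq_mul _ _
  calc ((⋃ i ∈ t, f i).ncard : ℝ) ≤ (F.card : ℝ) := by exact_mod_cast h1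
    _ ≤ t.card * B := le_trans h2 h3

/-- The per-scale counting constant. -/
def CCc (ν : ℝ) (n : ℕ) : ℝ :=
  (176*ν*Real.sqrt n+1)^n + (48*Real.sqrt n+1)^n + (4*ν+1)^n * (48*Real.sqrt n+1)^n

lemma CCc_pos {ν : ℝ} (hν : 1 < ν) (n : ℕ) : 0 < CCc ν n := by
  unfold CCc
  have h := Real.sqrt_nonneg (n:ℝ)
  positivity

lemma count_bound (hn : 0 < n) {ν : ℝ} (hν : 1 < ν) {Λ : Set E} (hΛ : Lac ν Λ)
    (hne : Λ.Nonempty) {Q₀ : Cube n} (hx₀ : Q₀.center ∈ Λ) (k : ℕ) :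
    {z : Fin n → ℤ | (k, z) ∈ Scov (closure Λ) Q₀}.Finite ∧
    ({z : Fin n → ℤ | (k, z) ∈ Scov (closure Λ) Q₀}.ncard : ℝ) ≤ CCc ν n * (k+1) := by
  classical
  have hν0 : (0:ℝ) < ν := by linarith
  have hν1 : (1:ℝ) ≤ ν := hν.le
  set Ω := closure Λ with hΩ
  have hΩne : Ω.Nonempty := hne.closure
  have hlacΩ : Lac ν Ω := lac_closure hν hΛ
  have hx₀Ω : Q₀.center ∈ Ω := subset_closure hx₀
  have hs := Q₀.side_pos
  set sq := Real.sqrt n with hsqdef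
  have hsq : 1 ≤ sq := Real.one_le_sqrt.2 (by exact_mod_cast hn)
  set u := uu Q₀.side k with hudef
  have hu : 0 < u := uu_pos hs k
  set τ := Q₀.diam / 2^k with hτdef
  have hτu : τ = 8*sq*u := by rw [hτdef, hudef, hsqdef]; exact tau_eq k
  have hτ0 : 0 < τ := by rw [hτu]; positivity
  have hdiam : 0 < Q₀.diam := Cube.diam_pos hn Q₀
  have hτdiam : τ ≤ Q₀.diam := by
    rw [hτdef]
    calc Q₀.diam / 2^k ≤ Q₀.diam / 1 := by
          apply div_le_div_of_nonneg_left hdiam.le one_pos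
          exact one_le_pow₀ (by norm_num)
      _ = Q₀.diam := div_one _
  have hdiam2k : Q₀.diam = 2^k * τ := by
    rw [hτdef]
    field_simp
  set Sk := {z : Fin n → ℤ | (k, z) ∈ Scov Ω Q₀} with hSk
  set Wf : (Fin n → ℤ) → E := Wcc Q₀.center Q₀.side k with hWf
  have hsep : ∀ z z', z ≠ z' → u ≤ dist (Wf z) (Wf z') := fun z z' h => Wsep hs Q₀.center k h
  -- choice of a nearby point of Ω
  have hchoice : ∀ z ∈ Sk, ∃ p ∈ Ω, dist (Wf z) p ≤ 3*τ ∧ dist p Q₀.center ≤ 3*Q₀.diam := by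
    intro z hz
    obtain ⟨y, hyW, hyQ, hyd1, hyd2⟩ := hz
    have hyc : dist y (Wf z) ≤ sq * (u/2) := by
      have h := Cube.dist_center_le hyW
      rwa [Wq_center, Wq_side, ← hudef, ← hsqdef, ← hWf] at h
    have hinf : infDist y Ω < 2*τ := lt_of_le_of_lt hyd2 (by rw [hτdef]; linarith)
    obtain ⟨p, hp, hyp⟩ := (infDist_lt_iff hΩne).1 hinf
    refine ⟨p, hp, ?_, ?_⟩
    · have h1 : dist (Wf z) p ≤ dist (Wf z) y + dist y p := dist_triangle _ _ _
      rw [dist_comm (Wf z) y] at h1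
      have h2 : sq * (u/2) ≤ τ := by rw [hτu]; nlinarith
      linarith
    · have h1 : dist p Q₀.center ≤ dist p y + dist y Q₀.center := dist_triangle _ _ _
      have h2 : dist y Q₀.center ≤ sq * (Q₀.side/2) := Cube.dist_center_le hyQ
      have h3 : sq * (Q₀.side/2) = Q₀.diam/2 := by
        rw [hsqdef]; unfold Cube.diam; ring
      rw [dist_comm p y] at h1
      linarith
  -- the pieces
  set SA : Set (Fin n → ℤ) := {z | z ∈ Sk ∧ dist (Wf z) 0 ≤ 11*ν*τ} with hSA
  set SA' : Set (Fin n → ℤ) := {z | z ∈ Sk ∧ dist (Wf z) Q₀.center ≤ 3*τ} with hSA'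
  set Zp : E → Set (Fin n → ℤ) := fun p => {z | dist (Wf z) p ≤ 3*τ} with hZp
  set ΩB : ℕ → Set E := fun m => {p | p ∈ Ω ∧ 8*ν*τ*2^m < ‖p‖ ∧ ‖p‖ ≤ 8*ν*τ*2^(m+1)} with hΩB
  set SB : ℕ → Set (Fin n → ℤ) := fun m => {z | z ∈ Sk ∧ ∃ p ∈ ΩB m, z ∈ Zp p} with hSB
  -- cardinality of the pieces
  have hSAcard : SA.Finite ∧ (SA.ncard : ℝ) ≤ (176*ν*sq+1)^n := by
    have h := zpack hn hu Wf hsep (c := (0:E)) (R := 11*ν*τ) (by positivity) SA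
      (fun z hz => hz.2)
    have heq : (2*(11*ν*τ)+u)/u = 176*ν*sq+1 := by
      rw [hτu]
      field_simp
      ring
    rwa [heq] at h
  have hZpcard : ∀ p : E, (Zp p).Finite ∧ ((Zp p).ncard : ℝ) ≤ (48*sq+1)^n := by
    intro p
    have h := zpack hn hu Wf hsep (c := p) (R := 3*τ) (by positivity) (Zp p)
      (fun z hz => hz)
    have heq : (2*(3*τ)+u)/u = 48*sq+1 := by
      rw [hτu]
      field_simp
      ring
    rwa [heq] at h
  have hSA'card : SA'.Finite ∧ (SA'.ncard : ℝ) ≤ (48*sq+1)^n := by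
    have hsub : SA' ⊆ Zp Q₀.center := fun z hz => hz.2
    obtain ⟨hf, hc⟩ := hZpcard Q₀.center
    refine ⟨hf.subset hsub, ?_⟩
    calc (SA'.ncard : ℝ) ≤ ((Zp Q₀.center).ncard : ℝ) := by
          exact_mod_cast Set.ncard_le_ncard hsub hf
      _ ≤ (48*sq+1)^n := hc
  have hΩBcard : ∀ m : ℕ, (ΩB m).Finite ∧ ((ΩB m).ncard : ℝ) ≤ (4*ν+1)^n := by
    intro m
    have h2m : (0:ℝ) < 2^m := by positivity
    have h := pack_set hn (0:E) (δ := 8*τ*2^m) (by positivity)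
      (R := 8*ν*τ*2^(m+1)) (by positivity) (S := ΩB m)
      (by
        rintro p ⟨hp, h1, h2⟩
        rw [mem_closedBall, dist_zero_right]
        exact h2)
      (by
        rintro p ⟨hp, hp1, hp2⟩ q ⟨hq, hq1, hq2⟩ hpq
        have h1 := hlacΩ p hp q hq hpq
        have h2 : 8*ν*τ*2^m < max ‖p‖ ‖q‖ := lt_of_lt_of_le hp1 (le_max_left _ _)
        nlinarith [h1, h2])
    have heq : (2*(8*ν*τ*2^(m+1))+8*τ*2^m)/(8*τ*2^m) = 4*ν+1 := by
      rw [pow_succ]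
      field_simp
      ring
    rwa [heq] at h
  have hSBcard : ∀ m : ℕ, (SB m).Finite ∧ ((SB m).ncard : ℝ) ≤ (4*ν+1)^n * (48*sq+1)^n := by
    intro m
    obtain ⟨hΩBf, hΩBc⟩ := hΩBcard m
    have hU := ncard_biUnion_le_real (hΩBf.toFinset) (f := Zp)
      (fun p => (hZpcard p).1) (B := (48*sq+1)^n) (fun p _ => (hZpcard p).2)
    have hsub : SB m ⊆ ⋃ p ∈ hΩBf.toFinset, Zp p := by
      rintro z ⟨hzSk, p, hpΩB, hzZp⟩
      simp only [Set.mem_iUnion]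
      exact ⟨p, hΩBf.mem_toFinset.2 hpΩB, hzZp⟩
    refine ⟨hU.1.subset hsub, ?_⟩
    have hcard : (hΩBf.toFinset.card : ℝ) ≤ (4*ν+1)^n := by
      rwa [Set.ncard_eq_toFinset_card _ hΩBf] at hΩBc
    calc ((SB m).ncard : ℝ) ≤ (((⋃ p ∈ hΩBf.toFinset, Zp p).ncard : ℕ) : ℝ) := by
          exact_mod_cast Set.ncard_le_ncard hsub hU.1
      _ ≤ hΩBf.toFinset.card * (48*sq+1)^n := hU.2
      _ ≤ (4*ν+1)^n * (48*sq+1)^n := by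
          have hpos : (0:ℝ) ≤ (48*sq+1)^n := by positivity
          nlinarith
  -- classification
  have hcover : Sk ⊆ SA ∪ SA' ∪ ⋃ m ∈ Finset.range (k+1), SB m := by
    intro z hz
    obtain ⟨p, hpΩ, hzp, hpx₀⟩ := hchoice z hz
    by_cases hp1 : p = Q₀.center
    · refine Or.inl (Or.inr ⟨hz, ?_⟩)
      rw [← hp1]
      exact hzp
    by_cases hp2 : ‖p‖ ≤ 8*ν*τ
    · refine Or.inl (Or.inl ⟨hz, ?_⟩)
      have h1 : dist (Wf z) 0 ≤ dist (Wf z) p + dist p 0 := dist_triangle _ _ _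
      rw [dist_zero_right p] at h1
      nlinarith
    push_neg at hp2
    have hplac : ‖p‖ ≤ 3*ν*Q₀.diam := by
      have h1 := hlacΩ p hpΩ Q₀.center hx₀Ω hp1
      have h2 : ‖p‖ ≤ ν * dist p Q₀.center := le_trans (le_max_left _ _) h1
      nlinarith
    have hPm : ∀ m : ℕ, 8*ν*τ*2^m < ‖p‖ → m < k := by
      intro m hm
      have h1 : 8*ν*τ*(2:ℝ)^m < 3*ν*(2^k*τ) := by
        rw [← hdiam2k]
        linarith
      have h2 : (2:ℝ)^m < 2^k := by
        have h3 : (0:ℝ) < ν*τ := mul_pos hν0 hτ0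
        have h4 : (0:ℝ) < 2^k := by positivity
        nlinarith
      exact_mod_cast (pow_lt_pow_iff_right₀ (by norm_num : (1:ℝ) < 2)).1 h2
    set P : ℕ → Prop := fun m => 8*ν*τ*2^m < ‖p‖ with hP
    have hP0 : P 0 := by simpa [hP] using hp2
    set m := Nat.findGreatest P k with hm
    have hmP : P m := Nat.findGreatest_spec (Nat.zero_le k) hP0
    have hmk : m < k := hPm m hmP
    have hnP : ¬ P (m+1) :=
      Nat.findGreatest_is_greatest (P := P) (n := k) (by rw [← hm]; omega) (by omega)
    refine Or.inr ?_
    simp only [Set.mem_iUnion]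
    refine ⟨m, Finset.mem_range.2 (by omega), hz, p, ⟨hpΩ, hmP, not_lt.1 hnP⟩, hzp⟩
  -- put everything together
  have hUn := ncard_biUnion_le_real (Finset.range (k+1)) (f := SB)
    (fun m => (hSBcard m).1) (B := (4*ν+1)^n * (48*sq+1)^n) (fun m _ => (hSBcard m).2)
  have hfinU : (SA ∪ SA' ∪ ⋃ m ∈ Finset.range (k+1), SB m).Finite :=
    ((hSAcard.1.union hSA'card.1).union hUn.1)
  refine ⟨Set.Finite.subset hfinU hcover, ?_⟩
  have hb1 : ((SA ∪ SA').ncard : ℝ) ≤ (176*ν*sq+1)^n + (48*sq+1)^n := by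
    calc ((SA ∪ SA').ncard : ℝ) ≤ ((SA.ncard + SA'.ncard : ℕ) : ℝ) := by
          exact_mod_cast Set.ncard_union_le SA SA'
      _ = (SA.ncard : ℝ) + (SA'.ncard : ℝ) := by push_cast; rfl
      _ ≤ (176*ν*sq+1)^n + (48*sq+1)^n := add_le_add hSAcard.2 hSA'card.2
  have hb2 : ((⋃ m ∈ Finset.range (k+1), SB m).ncard : ℝ) ≤ ((k:ℝ)+1) * ((4*ν+1)^n * (48*sq+1)^n) := by
    have h := hUn.2
    rw [Finset.card_range] at h
    push_cast at h ⊢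
    exact h
  calc (Sk.ncard : ℝ) ≤ (((SA ∪ SA' ∪ ⋃ m ∈ Finset.range (k+1), SB m).ncard : ℕ) : ℝ) := by
        exact_mod_cast Set.ncard_le_ncard hcover hfinU
    _ ≤ ((SA ∪ SA').ncard : ℝ) + ((⋃ m ∈ Finset.range (k+1), SB m).ncard : ℝ) := by
        exact_mod_cast Set.ncard_union_le _ _
    _ ≤ (176*ν*sq+1)^n + (48*sq+1)^n + (k+1) * ((4*ν+1)^n * (48*sq+1)^n) := by
        linarith
    _ ≤ CCc ν n * (k+1) := by
        unfold CCc
        rw [hsqdef] at *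
        have h1 : (0:ℝ) ≤ (176*ν*Real.sqrt n+1)^n + (48*Real.sqrt n+1)^n := by positivity
        have h2 : (0:ℝ) ≤ (4*ν+1)^n * (48*Real.sqrt n+1)^n := by positivity
        have h3 : (1:ℝ) ≤ (k:ℝ)+1 := by
          have : (0:ℝ) ≤ (k:ℝ) := Nat.cast_nonneg k
          linarith
        nlinarith

end Count


section Sum
open Metric
variable {n : ℕ}
local notation "E" => EuclideanSpace ℝ (Fin n)
set_option maxHeartbeats 2000000

lemma aux_geom {σ : ℝ} (h0 : 0 ≤ σ) (h1 : σ < 1) (k : ℕ) :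
    ((k:ℝ)+1) * σ^k ≤ (1-σ)⁻¹ := by
  have h1σ : 0 < 1 - σ := by linarith
  have hs : ∑ j ∈ Finset.range (k+1), σ^j ≤ (1-σ)⁻¹ := by
    have hne : σ ≠ 1 := ne_of_lt h1
    rw [geom_sum_eq hne]
    rw [div_le_iff_of_neg (by linarith : σ - 1 < 0)]
    have hp : (0:ℝ) ≤ σ^(k+1) := by positivity
    have hinv : (1-σ)⁻¹ * (1-σ) = 1 := inv_mul_cancel₀ (ne_of_gt h1σ)
    nlinarith [hinv]
  have ht : ∀ j ∈ Finset.range (k+1), σ^k ≤ σ^j := by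
    intro j hj
    rw [Finset.mem_range] at hj
    exact pow_le_pow_of_le_one h0 h1.le (by omega)
  calc ((k:ℝ)+1) * σ^k = ∑ _j ∈ Finset.range (k+1), σ^k := by
        rw [Finset.sum_const, Finset.card_range, nsmul_eq_mul]
        push_cast
        ring
    _ ≤ ∑ j ∈ Finset.range (k+1), σ^j := Finset.sum_le_sum ht
    _ ≤ (1-σ)⁻¹ := hs


lemma vol_Wq (x₀ : E) {s : ℝ} (hs : 0 < s) (k : ℕ) (z : Fin n → ℤ) :
    (Wq x₀ hs k z).vol = (uu s k)^n := rfl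

lemma cover_bound (hn : 0 < n) {ν lam : ℝ} (hν : 1 < ν) (hlam0 : 0 < lam) :
    ∃ A : ℝ, 0 < A ∧ ∀ {Λ : Set (EuclideanSpace ℝ (Fin n))}, Lac ν Λ → Λ.Nonempty →
      ∀ (g : EuclideanSpace ℝ (Fin n) → ℝ≥0∞) (M : ℝ≥0∞),
      (∀ W : Cube n, W ∈ whitneyFamily (closure Λ) 3 8 →
        (∫⁻ x in W.toSet, g x) ≤ ENNReal.ofReal (W.vol ^ lam) * M) →
      ∀ Q₀ : Cube n, Q₀.center ∈ Λ →
        (∫⁻ x in Q₀.toSet, g x) ≤ ENNReal.ofReal (A * Q₀.vol ^ lam) * M := by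
  classical
  have hν0 : (0:ℝ) < ν := by linarith
  set σr : ℝ := ((1:ℝ)/2) ^ ((n:ℝ)*lam/2) with hσr
  have hσ0 : 0 < σr := Real.rpow_pos_of_pos (by norm_num) _
  have hσ1 : σr < 1 :=
    Real.rpow_lt_one (by norm_num) (by norm_num) (by positivity)
  have h1σ : 0 < 1 - σr := by linarith
  set A : ℝ := CCc ν n * ((1-σr)⁻¹ * (1-σr)⁻¹) with hA
  have hCc := CCc_pos hν n
  refine ⟨A, by positivity, ?_⟩
  intro Λ hΛ hne g M hM Q₀ hx₀
  set Ω := closure Λ with hΩ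
  have hΩne : Ω.Nonempty := hne.closure
  have hΩc : IsClosed Ω := isClosed_closure
  have hnull : volume Ω = 0 := lac_closure_null hν hn hΛ
  have hs := Q₀.side_pos
  set s := Q₀.side with hsdef
  -- the value of the weights at scale k
  set v : ℕ → ℝ≥0∞ := fun k => ENNReal.ofReal (((uu s k)^n) ^ lam) with hv
  -- the geometric bound for v
  have hvk : ∀ k : ℕ, v k ≤ ENNReal.ofReal ((s^n)^lam) *
      (ENNReal.ofReal σr ^ k * ENNReal.ofReal σr ^ k) := by
    intro k
    have h2k : (0:ℝ) < 2^k := by positivity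
    have huu : uu s k ≤ s / 2^k := by
      unfold uu
      apply div_le_div_of_nonneg_left hs.le (by positivity)
      nlinarith
    have huu0 : 0 < uu s k := uu_pos hs k
    have hreal : ((uu s k)^n) ^ lam ≤ (s^n)^lam * (σr^k * σr^k) := by
      have h1 : ((uu s k)^n : ℝ) ^ lam ≤ ((s/2^k)^n) ^ lam :=
        Real.rpow_le_rpow (by positivity) (pow_le_pow_left₀ huu0.le huu n) hlam0.le
      have h2 : ((s/2^k)^n : ℝ) ^ lam = (s^n)^lam * (σr^k * σr^k) := by
        rw [div_pow, Real.div_rpow (by positivity) (by positivity)]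
        have h3 : ((2:ℝ)^k)^n = 2^(k*n) := by rw [← pow_mul]
        have h4 : (((2:ℝ)^(k*n) : ℝ)) ^ lam = (2:ℝ) ^ ((k*n : ℕ) * lam : ℝ) := by
          rw [← Real.rpow_natCast (2:ℝ) (k*n), ← Real.rpow_mul (by norm_num)]
        have h5 : σr^k * σr^k = ((1:ℝ)/2) ^ ((k*n : ℕ) * lam : ℝ) := by
          rw [hσr, ← Real.rpow_natCast (((1:ℝ)/2) ^ ((n:ℝ)*lam/2)) k,
            ← Real.rpow_mul (by norm_num : (0:ℝ) ≤ 1/2),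
            ← Real.rpow_add (by norm_num : (0:ℝ) < 1/2)]
          congr 1
          push_cast
          ring
        rw [h3, h4, h5]
        have h6 : ((1:ℝ)/2) ^ (((k*n:ℕ):ℝ) * lam) = ((2:ℝ) ^ (((k*n:ℕ):ℝ) * lam))⁻¹ := by
          rw [Real.div_rpow (by norm_num) (by norm_num), Real.one_rpow, one_div]
        rw [h6, div_eq_mul_inv]
      linarith
    calc v k ≤ ENNReal.ofReal ((s^n)^lam * (σr^k * σr^k)) := ENNReal.ofReal_le_ofReal hreal
      _ = ENNReal.ofReal ((s^n)^lam) * (ENNReal.ofReal σr ^ k * ENNReal.ofReal σr ^ k) := by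
          rw [ENNReal.ofReal_mul (by positivity), ENNReal.ofReal_mul (by positivity),
            ← ENNReal.ofReal_pow hσ0.le]
  -- per-scale tsum bound
  have hperk : ∀ k : ℕ, (∑' z : Fin n → ℤ,
      (Scov Ω Q₀).indicator (fun kz => v kz.1) (k, z)) ≤
      ENNReal.ofReal (CCc ν n * ((k:ℝ)+1)) * v k := by
    intro k
    obtain ⟨hfin, hcard⟩ := count_bound hn hν hΛ hne hx₀ k
    have heq : ∀ z : Fin n → ℤ, (Scov Ω Q₀).indicator (fun kz => v kz.1) (k, z) =
        {z : Fin n → ℤ | (k, z) ∈ Scov Ω Q₀}.indicator (fun _ => v k) z := by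
      intro z
      by_cases h : (k, z) ∈ Scov Ω Q₀
      · rw [Set.indicator_apply, Set.indicator_apply]
        simp only [Set.mem_setOf_eq, if_pos h]
      · rw [Set.indicator_apply, Set.indicator_apply]
        simp only [Set.mem_setOf_eq, if_neg h]
    rw [tsum_congr heq]
    rw [tsum_eq_sum (s := hfin.toFinset) (by
      intro z hz
      apply Set.indicator_of_notMem
      intro hmem
      exact hz (hfin.mem_toFinset.2 hmem))]
    calc ∑ z ∈ hfin.toFinset, {z : Fin n → ℤ | (k, z) ∈ Scov Ω Q₀}.indicator (fun _ => v k) z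
        ≤ ∑ _z ∈ hfin.toFinset, v k := by
          apply Finset.sum_le_sum
          intro z _
          exact Set.indicator_le_self _ _ z
      _ = (hfin.toFinset.card : ℝ≥0∞) * v k := by
          rw [Finset.sum_const, nsmul_eq_mul]
      _ ≤ ENNReal.ofReal (CCc ν n * ((k:ℝ)+1)) * v k := by
          apply mul_le_mul_left
          rw [← ENNReal.ofReal_natCast]
          apply ENNReal.ofReal_le_ofReal
          rw [← Set.ncard_eq_toFinset_card _ hfin]
          linarith [hcard]
  -- total sum bound
  have htot : (∑' i : Scov Ω Q₀, v (i : ℕ × (Fin n → ℤ)).1) ≤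
      ENNReal.ofReal (A * Q₀.vol ^ lam) := by
    rw [tsum_subtype (Scov Ω Q₀) (fun kz => v kz.1)]
    have hprod : (∑' kz : ℕ × (Fin n → ℤ), (Scov Ω Q₀).indicator (fun kz => v kz.1) kz) =
        ∑' (k : ℕ) (z : Fin n → ℤ), (Scov Ω Q₀).indicator (fun kz => v kz.1) (k, z) := by
      rw [← ENNReal.tsum_prod (f := fun k z => (Scov Ω Q₀).indicator (fun kz => v kz.1) (k, z))]
    rw [hprod]
    have hB : ∀ k : ℕ, ENNReal.ofReal (CCc ν n * ((k:ℝ)+1)) * v k ≤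
        ENNReal.ofReal (CCc ν n * (1-σr)⁻¹ * (s^n)^lam) * ENNReal.ofReal σr ^ k := by
      intro k
      calc ENNReal.ofReal (CCc ν n * ((k:ℝ)+1)) * v k
          ≤ ENNReal.ofReal (CCc ν n * ((k:ℝ)+1)) *
            (ENNReal.ofReal ((s^n)^lam) * (ENNReal.ofReal σr ^ k * ENNReal.ofReal σr ^ k)) :=
            mul_le_mul_right (hvk k) _
        _ = (ENNReal.ofReal (CCc ν n) * (ENNReal.ofReal (((k:ℝ)+1)) * ENNReal.ofReal σr ^ k)) *
            (ENNReal.ofReal ((s^n)^lam) * ENNReal.ofReal σr ^ k) := by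
            rw [ENNReal.ofReal_mul hCc.le]
            ring
        _ ≤ (ENNReal.ofReal (CCc ν n) * ENNReal.ofReal ((1-σr)⁻¹)) *
            (ENNReal.ofReal ((s^n)^lam) * ENNReal.ofReal σr ^ k) := by
            apply mul_le_mul_left
            apply mul_le_mul_right
            rw [← ENNReal.ofReal_pow hσ0.le, ← ENNReal.ofReal_mul (by positivity)]
            exact ENNReal.ofReal_le_ofReal (aux_geom hσ0.le hσ1 k)
        _ = ENNReal.ofReal (CCc ν n * (1-σr)⁻¹ * (s^n)^lam) * ENNReal.ofReal σr ^ k := by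
            rw [ENNReal.ofReal_mul (by positivity), ENNReal.ofReal_mul hCc.le]
            ring
    calc (∑' (k : ℕ) (z : Fin n → ℤ), (Scov Ω Q₀).indicator (fun kz => v kz.1) (k, z))
        ≤ ∑' k : ℕ, ENNReal.ofReal (CCc ν n * ((k:ℝ)+1)) * v k :=
          ENNReal.tsum_le_tsum hperk
      _ ≤ ∑' k : ℕ, ENNReal.ofReal (CCc ν n * (1-σr)⁻¹ * (s^n)^lam) * ENNReal.ofReal σr ^ k :=
          ENNReal.tsum_le_tsum hB
      _ = ENNReal.ofReal (CCc ν n * (1-σr)⁻¹ * (s^n)^lam) * ∑' k : ℕ, ENNReal.ofReal σr ^ k :=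
          ENNReal.tsum_mul_left
      _ = ENNReal.ofReal (CCc ν n * (1-σr)⁻¹ * (s^n)^lam) * ENNReal.ofReal ((1-σr)⁻¹) := by
          rw [ENNReal.tsum_geometric]
          congr 1
          rw [ENNReal.ofReal_inv_of_pos h1σ]
          congr 1
          rw [ENNReal.ofReal_sub _ hσ0.le, ENNReal.ofReal_one]
      _ = ENNReal.ofReal (A * Q₀.vol ^ lam) := by
          rw [← ENNReal.ofReal_mul (by positivity)]
          congr 1
          rw [hA]
          have : Q₀.vol = s^n := rfl
          rw [this]
          ring
  -- the main estimate
  have hWmem : ∀ i : Scov Ω Q₀,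
      Wq Q₀.center Q₀.side_pos (i : ℕ × (Fin n → ℤ)).1 (i : ℕ × (Fin n → ℤ)).2 ∈
        whitneyFamily Ω 3 8 := by
    rintro ⟨⟨k, z⟩, hi⟩
    obtain ⟨y, hyW, hyRR⟩ := hi
    exact Wq_whitney hn hΩne k z y hyW hyRR
  calc (∫⁻ x in Q₀.toSet, g x)
      = ∫⁻ x in (Q₀.toSet ∩ Ω) ∪ (Q₀.toSet \ Ω), g x := by
        rw [Set.inter_union_diff]
    _ ≤ (∫⁻ x in Q₀.toSet ∩ Ω, g x) + ∫⁻ x in Q₀.toSet \ Ω, g x :=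
        lintegral_union_le _ _ _
    _ ≤ 0 + ∫⁻ x in Q₀.toSet \ Ω, g x := by
        rw [setLIntegral_measure_zero _ _ (measure_mono_null Set.inter_subset_right hnull)]
    _ = ∫⁻ x in Q₀.toSet \ Ω, g x := by rw [zero_add]
    _ ≤ ∫⁻ x in ⋃ (i : Scov Ω Q₀),
          (Wq Q₀.center Q₀.side_pos (i : ℕ × (Fin n → ℤ)).1 (i : ℕ × (Fin n → ℤ)).2).toSet, g x :=
        lintegral_mono_set (cover_subset hn hΩc hΩne (subset_closure hx₀))
    _ ≤ ∑' i : Scov Ω Q₀, ∫⁻ x in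
          (Wq Q₀.center Q₀.side_pos (i : ℕ × (Fin n → ℤ)).1 (i : ℕ × (Fin n → ℤ)).2).toSet, g x :=
        lintegral_iUnion_le _ _
    _ ≤ ∑' i : Scov Ω Q₀, ENNReal.ofReal
          ((Wq Q₀.center Q₀.side_pos (i : ℕ × (Fin n → ℤ)).1 (i : ℕ × (Fin n → ℤ)).2).vol ^ lam) * M := by
        exact ENNReal.tsum_le_tsum (fun i => hM _ (hWmem i))
    _ ≤ ENNReal.ofReal (A * Q₀.vol ^ lam) * M := by
        rw [ENNReal.tsum_mul_right]
        apply mul_le_mul_left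
        calc (∑' i : Scov Ω Q₀, ENNReal.ofReal
            ((Wq Q₀.center Q₀.side_pos (i : ℕ × (Fin n → ℤ)).1 (i : ℕ × (Fin n → ℤ)).2).vol ^ lam))
            = ∑' i : Scov Ω Q₀, v (i : ℕ × (Fin n → ℤ)).1 := by
              apply tsum_congr
              intro i
              rw [vol_Wq]
          _ ≤ ENNReal.ofReal (A * Q₀.vol ^ lam) := htot

end Sum


section Dir2
open Metric
variable {n : ℕ}
local notation "E" => EuclideanSpace ℝ (Fin n)
set_option maxHeartbeats 2000000

lemma rpow_iSup_le {ι : Sort*} (f : ι → ℝ≥0∞) {c : ℝ} (hc : 0 < c) :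
    (⨆ i, f i) ^ c ≤ ⨆ i, (f i) ^ c := by
  rcases isEmpty_or_nonempty ι with h | h
  · rw [iSup_of_empty, iSup_of_empty]
    rw [bot_eq_zero, ENNReal.zero_rpow_of_pos hc]
  · have h1 : ∀ i, f i ≤ (⨆ j, (f j)^c)^(1/c) := by
      intro i
      have h2 : (f i)^c ≤ ⨆ j, (f j)^c := le_iSup (fun j => (f j)^c) i
      have h3 := ENNReal.rpow_le_rpow h2 (by positivity : (0:ℝ) ≤ 1/c)
      rwa [← ENNReal.rpow_mul, mul_one_div, div_self (ne_of_gt hc), ENNReal.rpow_one] at h3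
    have h4 : (⨆ i, f i) ≤ (⨆ j, (f j)^c)^(1/c) := iSup_le h1
    have h5 := ENNReal.rpow_le_rpow h4 hc.le
    rwa [← ENNReal.rpow_mul, one_div, inv_mul_cancel₀ (ne_of_gt hc), ENNReal.rpow_one] at h5

lemma dir2E (hn : 0 < n) {ν lam p : ℝ} (hν : 1 < ν) (hlam0 : 0 < lam) (hp : 1 ≤ p) :
    ∃ C : ℝ, 0 < C ∧ ∀ {Λ : Set (EuclideanSpace ℝ (Fin n))}, Lac ν Λ → Λ.Nonempty →
      ∀ (w : EuclideanSpace ℝ (Fin n) → ℝ) (g : EuclideanSpace ℝ (Fin n) → ℝ≥0∞),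
      morreyNormE {Q : Cube n | Q.center ∈ Λ} lam p w g ≤
        ENNReal.ofReal C * morreyNormE (whitneyFamily (closure Λ) 3 8) lam p w g := by
  have hp0 : (0:ℝ) < p := lt_of_lt_of_le one_pos hp
  have h1p : 1/p ≤ 1 := (div_le_one hp0).2 hp
  have h1p0 : (0:ℝ) < 1/p := by positivity
  obtain ⟨A, hA0, hAbound⟩ := cover_bound hn hν hlam0
  refine ⟨max A 1, lt_of_lt_of_le one_pos (le_max_right _ _), ?_⟩
  intro Λ hΛ hne w g
  set Ω := closure Λ with hΩ
  set Msup := ⨆ (W : Cube n) (_ : W ∈ whitneyFamily Ω 3 8), TT lam p w g W with hMsup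
  set G : EuclideanSpace ℝ (Fin n) → ℝ≥0∞ := fun x => (g x) ^ p * ENNReal.ofReal (w x) with hG
  have hvolpos : ∀ Q : Cube n, (0:ℝ) < Q.vol ^ lam :=
    fun Q => Real.rpow_pos_of_pos Q.vol_pos lam
  have hof0 : ∀ Q : Cube n, ENNReal.ofReal (Q.vol ^ lam) ≠ 0 := by
    intro Q
    rw [Ne, ENNReal.ofReal_eq_zero, not_le]
    exact hvolpos Q
  have hoft : ∀ Q : Cube n, ENNReal.ofReal (Q.vol ^ lam) ≠ ⊤ := fun _ => ENNReal.ofReal_ne_top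
  have hTTint : ∀ Q : Cube n, ENNReal.ofReal (Q.vol ^ lam) * TT lam p w g Q =
      ∫⁻ x in Q.toSet, G x := by
    intro Q
    unfold TT
    rw [← mul_assoc, ENNReal.mul_inv_cancel (hof0 Q) (hoft Q), one_mul]
  have hM : ∀ W : Cube n, W ∈ whitneyFamily Ω 3 8 →
      (∫⁻ x in W.toSet, G x) ≤ ENNReal.ofReal (W.vol ^ lam) * Msup := by
    intro W hW
    rw [← hTTint W]
    apply mul_le_mul_right
    exact le_iSup₂ (f := fun (Q : Cube n) (_ : Q ∈ whitneyFamily Ω 3 8) => TT lam p w g Q) W hW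
  have hQ₀ : ∀ Q₀ : Cube n, Q₀.center ∈ Λ → TT lam p w g Q₀ ≤ ENNReal.ofReal A * Msup := by
    intro Q₀ hx₀
    have h1 := hAbound hΛ hne G Msup hM Q₀ hx₀
    unfold TT
    calc (ENNReal.ofReal (Q₀.vol ^ lam))⁻¹ * ∫⁻ x in Q₀.toSet, (g x) ^ p * ENNReal.ofReal (w x)
        ≤ (ENNReal.ofReal (Q₀.vol ^ lam))⁻¹ * (ENNReal.ofReal (A * Q₀.vol ^ lam) * Msup) :=
          mul_le_mul_right h1 _
      _ = ENNReal.ofReal A * Msup := by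
          rw [ENNReal.ofReal_mul hA0.le, ← mul_assoc, ← mul_assoc,
            mul_comm (ENNReal.ofReal (Q₀.vol ^ lam))⁻¹ (ENNReal.ofReal A), mul_assoc
              (ENNReal.ofReal A), ENNReal.inv_mul_cancel (hof0 Q₀) (hoft Q₀), mul_one]
  -- conclude
  rw [morreyNormE_eq, morreyNormE_eq]
  apply iSup₂_le
  intro Q₀ hx₀
  have h2 := ENNReal.rpow_le_rpow (hQ₀ Q₀ hx₀) h1p0.le
  have h3 : (ENNReal.ofReal A * Msup) ^ (1/p) ≤
      ENNReal.ofReal (max A 1) * ⨆ (W : Cube n) (_ : W ∈ whitneyFamily Ω 3 8),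
        (TT lam p w g W) ^ (1/p) := by
    rw [ENNReal.mul_rpow_of_nonneg _ _ h1p0.le]
    have h4 : (ENNReal.ofReal A) ^ (1/p) ≤ ENNReal.ofReal (max A 1) := by
      have h5 : ENNReal.ofReal A ≤ ENNReal.ofReal (max A 1) :=
        ENNReal.ofReal_le_ofReal (le_max_left _ _)
      have h6 : (1:ℝ≥0∞) ≤ ENNReal.ofReal (max A 1) :=
        ENNReal.one_le_ofReal.2 (le_max_right _ _)
      calc (ENNReal.ofReal A) ^ (1/p) ≤ (ENNReal.ofReal (max A 1)) ^ (1/p) :=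
            ENNReal.rpow_le_rpow h5 h1p0.le
        _ ≤ (ENNReal.ofReal (max A 1)) ^ (1:ℝ) :=
            ENNReal.rpow_le_rpow_of_exponent_le h6 h1p
        _ = ENNReal.ofReal (max A 1) := ENNReal.rpow_one _
    have h7 : Msup ^ (1/p) ≤ ⨆ (W : Cube n) (_ : W ∈ whitneyFamily Ω 3 8),
        (TT lam p w g W) ^ (1/p) := by
      rw [hMsup]
      rw [iSup_subtype' (p := fun W : Cube n => W ∈ whitneyFamily Ω 3 8)
        (f := fun W _ => TT lam p w g W)]
      rw [iSup_subtype' (p := fun W : Cube n => W ∈ whitneyFamily Ω 3 8)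
        (f := fun W _ => (TT lam p w g W) ^ (1/p))]
      exact rpow_iSup_le _ h1p0
    exact mul_le_mul' h4 h7
  exact le_trans h2 h3

end Dir2


section Final
open Metric
variable {n : ℕ}
local notation "E" => EuclideanSpace ℝ (Fin n)
set_option maxHeartbeats 2000000

lemma morreyNorm_eq (F : Set (Cube n)) (lam p : ℝ) (w f : E → ℝ) :
    morreyNorm F lam p w f = morreyNormE F lam p w (fun x => ENNReal.ofReal |f x|) := rfl

lemma morreyNormE_empty (lam p : ℝ) (w : E → ℝ) (g : E → ℝ≥0∞) :
    morreyNormE (∅ : Set (Cube n)) lam p w g = 0 := by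
  rw [morreyNormE_eq]
  simp

lemma whitneyFamily_empty (hn : 0 < n) (r₁ r₂ : ℝ) (hr₁ : 0 < r₁) :
    whitneyFamily (∅ : Set E) r₁ r₂ = (∅ : Set (Cube n)) := by
  ext Q
  simp only [whitneyFamily, Set.mem_setOf_eq, Set.mem_empty_iff_false, iff_false]
  rintro ⟨h1, h2⟩
  have hsd : setDist Q.toSet (∅ : Set E) = 0 := by
    unfold setDist
    haveI : Nonempty Q.toSet := Q.toSet_nonempty.to_subtype
    have hinner : ∀ x : Q.toSet, (⨅ (y : (∅ : Set E)), dist (x:E) (y:E)) = 0 :=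
      fun x => Real.iInf_of_isEmpty _
    rw [iInf_congr hinner]
    exact ciInf_const
  rw [hsd] at h1
  have := Cube.diam_pos hn Q
  nlinarith
end Final

/-- Lemma `connect`: for a `ν`-lacunary set `Λ` with associated
family `F` of cubes centered at points of `Λ` and `Ω = closure Λ`, there are
`0 < r₁ < r₂` (depending only on `ν, n`) such that
`‖f‖_{M^p_{λ,F}(w)} ≍ ‖f‖_{M^p_{λ,W_{r₁,r₂}}(w)}`, with implicit constants
depending only on `ν, λ, p, n`. -/
theorem statement16 {n : ℕ} (hn : 0 < n) (ν : ℝ) (hν : 1 < ν) :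
    ∃ r₁ r₂ : ℝ, 0 < r₁ ∧ r₁ < r₂ ∧
      ∀ lam p : ℝ, 0 < lam → lam < 1 → 1 ≤ p →
        ∃ c C : ℝ, 0 < c ∧ 0 < C ∧
          ∀ Λ : Set (EuclideanSpace ℝ (Fin n)),
            (∀ x ∈ Λ, ∀ y ∈ Λ, x ≠ y → max ‖x‖ ‖y‖ ≤ ν * dist x y) →
            ∀ w : EuclideanSpace ℝ (Fin n) → ℝ, (∀ x, 0 ≤ w x) →
              MeasureTheory.LocallyIntegrable w MeasureTheory.volume →
              ∀ f : EuclideanSpace ℝ (Fin n) → ℝ,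
                ENNReal.ofReal c *
                    morreyNorm (whitneyFamily (closure Λ) r₁ r₂) lam p w f ≤
                  morreyNorm {Q : Cube n | Q.center ∈ Λ} lam p w f ∧
                morreyNorm {Q : Cube n | Q.center ∈ Λ} lam p w f ≤
                  ENNReal.ofReal C *
                    morreyNorm (whitneyFamily (closure Λ) r₁ r₂) lam p w f := by
  classical
  refine ⟨3, 8, by norm_num, by norm_num, ?_⟩
  intro lam p hlam0 hlam1 hp
  have hp0 : (0:ℝ) < p := lt_of_lt_of_le one_pos hp
  have hsq0 : (0:ℝ) ≤ Real.sqrt n := Real.sqrt_nonneg _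
  set D := (22*Real.sqrt n+1) ^ ((n:ℝ)*lam) with hD
  have hD0 : 0 < D := Real.rpow_pos_of_pos (by linarith) _
  obtain ⟨C, hC0, hdir2⟩ := dir2E hn hν hlam0 hp
  refine ⟨D⁻¹, C, by positivity, hC0, ?_⟩
  intro Λ hΛ w hw hwInt f
  rcases Set.eq_empty_or_nonempty Λ with hΛe | hne
  · -- degenerate case : `Λ = ∅`, both families are empty
    have hcent : ({Q : Cube n | Q.center ∈ Λ}) = (∅ : Set (Cube n)) := by
      rw [hΛe]; simp
    have hwhit : whitneyFamily (closure Λ) (3:ℝ) 8 = (∅ : Set (Cube n)) := by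
      rw [hΛe, closure_empty]
      exact whitneyFamily_empty hn 3 8 (by norm_num)
    rw [morreyNorm_eq, morreyNorm_eq, hcent, hwhit, morreyNormE_empty]
    simp
  · -- main case
    have hd1 := dir1E hn hν hlam0 hp hΛ hne w (fun x => ENNReal.ofReal |f x|)
    have hd2 := hdir2 hΛ hne w (fun x => ENNReal.ofReal |f x|)
    rw [morreyNorm_eq, morreyNorm_eq]
    constructor
    · have h1 := mul_le_mul_right hd1 (ENNReal.ofReal D⁻¹)
      rw [← mul_assoc, ← ENNReal.ofReal_mul (by positivity), inv_mul_cancel₀ hD0.ne',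
        ENNReal.ofReal_one, one_mul] at h1
      exact h1
    · exact hd2
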